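/- arXiv:1903.04453 — 3 statements merged into one kernel-verified Lean document; each statement's English description precedes it below -/
import Mathlib

section
/- Let t ≥ 1 and let G be a C_{2t+1}-critical graph. If C is a (2t+1)-cycle in G and S is a string of G not contained in C, then at most one endpoint of S lies in V(C). -/
open SimpleGraph

/-- A graph `G` is `H`-critical if every proper subgraph of `G` admits a homomorphism
to `H`, but `G` itself does not. -/
def HCritical {V W : Type} (G : SimpleGraph V) (H : SimpleGraph W) : Prop :=
  ¬ Nonempty (G →g H) ∧ ∀ G' : G.Subgraph, G' ≠ ⊤ → Nonempty (G'.coe →g H)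

/-- A string in `G` is a path whose internal vertices all have degree 2 in `G`
and whose endpoints have degree at least 3. -/
def IsString {V : Type} [Fintype V] (G : SimpleGraph V) [DecidableRel G.Adj]
    {u v : V} (p : G.Walk u v) : Prop :=
  p.IsPath ∧ 3 ≤ G.degree u ∧ 3 ≤ G.degree v ∧
    ∀ w ∈ p.support, w ≠ u → w ≠ v → G.degree w = 2

/-!
Split the cell `C` at `u` and `v` into two arcs `q₁`, `q₂`; as `|q₁| + |q₂| = 2t + 1` is odd, one
arc, say `q₁`, makes `S ∪ q₁` an odd closed walk. If `|S| + |q₁| < 2t + 1`, delete an edge at `u`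
(which has degree at least 3) missing from this closed walk: the rest of `G` maps to `C_{2t+1}`,
whose odd closed walks have length at least `2t + 1`, a contradiction. Otherwise `|q₂| ≤ |S|` with
`|S| - |q₂|` even. Delete an edge of `S` outside `C` and map the rest to `C_{2t+1}`; the image of
`q₂`, padded by back-and-forth steps, is a walk of length `|S|` between the images of `u` and `v`.
Since the internal vertices of `S` have no neighbours off `S`, laying `S` along this walk extends
the map to all of `G`, which is impossible.
-/

namespace SimpleGraph

variable {V : Type*} {G : SimpleGraph V}

open Fin.CommRing in
theorem cycleGraph.exists_intCast_eq_sub_of_walk {n : ℕ} {a b : Fin (n + 2)} :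
    (w : (cycleGraph (n + 2)).Walk a b) →
      ∃ k : ℤ, a - b = (k : Fin (n + 2)) ∧ k.natAbs ≤ w.length ∧ Even (k + w.length)
  | .nil => ⟨0, by simp, by simp, by simp⟩
  | .cons (v := a') h w => by
    obtain ⟨k, hk, hle, hpar⟩ := exists_intCast_eq_sub_of_walk w
    have hsplit : a - b = (a - a') + (a' - b) := (sub_add_sub_cancel _ _ _).symm
    rw [Walk.length_cons]
    rcases h with h | h
    · refine ⟨k + 1, ?_, by omega, ?_⟩
      · rw [hsplit, hk, h]; push_cast; ring
      · rw [Int.even_iff] at hpar ⊢; push_cast; omega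
    · refine ⟨k - 1, ?_, by omega, ?_⟩
      · rw [hsplit, hk, ← neg_sub, h]; push_cast; ring
      · rw [Int.even_iff] at hpar ⊢; push_cast; omega

open Fin.CommRing in
theorem cycleGraph.le_length_of_odd {n : ℕ} {a : Fin n} (w : (cycleGraph n).Walk a a)
    (hw : Odd w.length) : n ≤ w.length := by
  obtain _ | _ | n := n
  · exact a.elim0
  · exact hw.pos
  obtain ⟨k, hk, hle, hpar⟩ := exists_intCast_eq_sub_of_walk w
  have hdvd : ((n + 2 : ℕ) : ℤ) ∣ k := by
    rw [← CharP.intCast_eq_zero_iff (Fin (n + 2)), ← hk, sub_self]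
  have hk0 : k ≠ 0 := by
    rintro rfl
    simp only [zero_add, Int.even_coe_nat] at hpar
    exact Nat.not_even_iff_odd.mpr hw hpar
  have := Int.natAbs_le_of_dvd_ne_zero hdvd hk0
  simp only [Int.natAbs_natCast] at this
  omega

theorem exists_adj_ne_ne_of_three_le_degree {a : V} [Fintype (G.neighborSet a)]
    (ha : 3 ≤ G.degree a) (x y : V) : ∃ b, G.Adj a b ∧ b ≠ x ∧ b ≠ y := by
  classical
  obtain ⟨b, hb, hbxy⟩ := Finset.exists_mem_notMem_of_card_lt_card
    (s := {x, y}) (t := G.neighborFinset a)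
    (by rw [card_neighborFinset_eq_degree]; exact Finset.card_le_two.trans_lt (by omega))
  simp only [Finset.mem_insert, Finset.mem_singleton, not_or] at hbxy
  exact ⟨b, (mem_neighborFinset _ _ _).mp hb, hbxy⟩

theorem deleteEdges_singleton_lt {e : Sym2 V} (he : e ∈ G.edgeSet) : G.deleteEdges {e} < G := by
  refine lt_of_le_of_ne (deleteEdges_le _) fun h => ?_
  have he' := he
  rw [← h, edgeSet_deleteEdges] at he'
  exact he'.2 rfl

namespace Walk

theorem exists_length_eq_add_two_mul {u v : V} (w : G.Walk u v) (hw : ¬ w.Nil) (j : ℕ) :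
    ∃ w' : G.Walk u v, w'.length = w.length + 2 * j := by
  induction j with
  | zero => exact ⟨w, rfl⟩
  | succ j ih =>
    obtain ⟨w', hw'⟩ := ih
    exact ⟨.cons (w.adj_snd hw) (.cons (w.adj_snd hw).symm w'), by simp [hw']; ring⟩

theorem IsPath.idxOf_getVert [DecidableEq V] {u v : V} {p : G.Walk u v} (hp : p.IsPath) {i : ℕ}
    (hi : i ≤ p.length) : p.support.idxOf (p.getVert i) = i := by
  have hmem := p.getVert_mem_support i
  refine hp.getVert_injOn ?_ hi (p.getVert_support_idxOf hmem)
  have := List.idxOf_lt_length_of_mem hmem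
  rw [length_support] at this
  exact Nat.lt_succ_iff.mp this

theorem IsPath.mem_edges_of_degree_eq_two {u v a b : V} {p : G.Walk u v} (hp : p.IsPath)
    (ha : a ∈ p.support) (hau : a ≠ u) (hav : a ≠ v) [Fintype (G.neighborSet a)]
    (hdeg : G.degree a = 2) (hab : G.Adj a b) : s(a, b) ∈ p.edges := by
  obtain ⟨i, rfl, hi⟩ := mem_support_iff_exists_getVert.mp ha
  have hi0 : i ≠ 0 := by rintro rfl; simp at hau
  have hil : i < p.length := hi.lt_of_ne (by rintro rfl; simp at hav)
  have hnbr : p.toSubgraph.neighborSet (p.getVert i) = G.neighborSet (p.getVert i) := by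
    refine Set.eq_of_subset_of_ncard_le (p.toSubgraph.neighborSet_subset _) ?_ (Set.toFinite _)
    rw [hp.ncard_neighborSet_toSubgraph_internal_eq_two hi0 hil, Set.ncard_eq_toFinset_card']
    exact hdeg.le
  have hb : b ∈ p.toSubgraph.neighborSet (p.getVert i) := hnbr ▸ hab
  rwa [← adj_toSubgraph_iff_mem_edges]

theorem IsCycle.exists_isPath_isPath {x u v : V} {c : G.Walk x x} (hc : c.IsCycle)
    (hu : u ∈ c.support) (hv : v ∈ c.support) (huv : u ≠ v) :
    ∃ q₁ q₂ : G.Walk u v, q₁.IsPath ∧ q₂.IsPath ∧ q₁.edges ⊆ c.edges ∧ q₂.edges ⊆ c.edges ∧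
      q₁.length + q₂.length = c.length := by
  classical
  set c' := c.rotate u hu
  have hc' : c'.IsCycle := hc.rotate hu
  have hv' : v ∈ c'.support := (mem_support_rotate_iff c u hu).mpr hv
  have hsplit := c'.take_spec hv'
  refine ⟨c'.takeUntil v hv', (c'.dropUntil v hv').reverse, hc'.isPath_takeUntil hv', ?_, ?_, ?_,
    ?_⟩
  · exact (IsCycle.isPath_of_append_right (not_nil_of_ne huv) (by rwa [hsplit])).reverse
  · exact fun f hf => (rotate_edges c u hu).mem_iff.mp (edges_takeUntil_subset_edges _ _ hf)
  · intro f hf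
    rw [edges_reverse, List.mem_reverse] at hf
    exact (rotate_edges c u hu).mem_iff.mp (edges_dropUntil_subset_edges _ _ hf)
  · rw [length_reverse, ← length_append, hsplit, length_rotate]

theorem IsPath.nonempty_hom_of_reroute {W : Type*} {H : SimpleGraph W} {u v : V}
    {p : G.Walk u v} (hp : p.IsPath)
    (hint : ∀ a ∈ p.support, a ≠ u → a ≠ v → ∀ b, G.Adj a b → s(a, b) ∈ p.edges)
    (φ : G.deleteEdges p.edgeSet →g H) (w : H.Walk (φ u) (φ v)) (hw : w.length = p.length) :
    Nonempty (G →g H) := by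
  classical
  let ψ : V → W := fun a => if a ∈ p.support then w.getVert (p.support.idxOf a) else φ a
  have hψ_getVert : ∀ i ≤ p.length, ψ (p.getVert i) = w.getVert i := fun i hi => by
    simp only [ψ, if_pos (p.getVert_mem_support i), hp.idxOf_getVert hi]
  have hψ_off : ∀ a b, G.Adj a b → s(a, b) ∉ p.edges → ψ a = φ a := by
    intro a b hab hnot
    by_cases ha : a ∈ p.support
    · obtain rfl | hau := eq_or_ne a u
      · simpa using hψ_getVert 0 (Nat.zero_le _)
      obtain rfl | hav := eq_or_ne a v
      · have := hψ_getVert p.length le_rfl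
        rwa [p.getVert_length, ← hw, w.getVert_length] at this
      exact absurd (hint a ha hau hav b hab) hnot
    · simp only [ψ, if_neg ha]
  refine ⟨⟨ψ, fun {a b} hab => ?_⟩⟩
  by_cases hab' : s(a, b) ∈ p.edges
  · obtain ⟨i, hi, he⟩ := (mk_mem_edges_iff_exists p).mp hab'
    have hadj := w.adj_getVert_succ (hw ▸ hi)
    rw [← hψ_getVert i hi.le, ← hψ_getVert (i + 1) hi] at hadj
    rcases Sym2.eq_iff.mp he with ⟨rfl, rfl⟩ | ⟨rfl, rfl⟩
    exacts [hadj, hadj.symm]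
  · rw [hψ_off a b hab hab', hψ_off b a hab.symm (by rwa [Sym2.eq_swap])]
    exact φ.map_adj (deleteEdges_adj.mpr ⟨hab, hab'⟩)

end Walk

end SimpleGraph

open SimpleGraph.Walk

theorem HCritical.nonempty_hom_of_lt {V W : Type} {G G' : SimpleGraph V} {H : SimpleGraph W}
    (hG : HCritical G H) (hlt : G' < G) : Nonempty (G' →g H) := by
  obtain ⟨φ⟩ := hG.2 (toSubgraph G' hlt.le) fun htop => hlt.ne <| by
    ext a b
    simpa using congrArg (fun S : G.Subgraph => S.Adj a b) htop
  exact ⟨φ.comp ⟨fun a => ⟨a, trivial⟩, id⟩⟩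

theorem HCritical.le_length_add_length_of_odd {V : Type} {G : SimpleGraph V} {n : ℕ}
    (hG : HCritical G (cycleGraph n)) {u v : V} {p q : G.Walk u v} (hp : p.IsPath)
    (hq : q.IsPath) [Fintype (G.neighborSet u)] (hu : 3 ≤ G.degree u)
    (hodd : Odd (p.length + q.length)) : n ≤ p.length + q.length := by
  obtain ⟨w, huw, hwp, hwq⟩ := exists_adj_ne_ne_of_three_le_degree hu p.snd q.snd
  have hnot : s(u, w) ∉ (p.append q.reverse).edges := by
    simp only [edges_append, edges_reverse, List.mem_append, List.mem_reverse, not_or]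
    exact ⟨fun h => hwp (hp.eq_snd_of_mem_edges h), fun h => hwq (hq.eq_snd_of_mem_edges h)⟩
  obtain ⟨φ⟩ := hG.nonempty_hom_of_lt (deleteEdges_singleton_lt (G.mem_edgeSet.mpr huw))
  have := cycleGraph.le_length_of_odd (((p.append q.reverse).toDeleteEdge _ hnot).map φ)
    (by simpa using hodd)
  simpa using this

theorem string_not_both_endpoints_in_cell_general (t : ℕ)
    {V : Type} [Fintype V] (G : SimpleGraph V) [DecidableRel G.Adj]
    (hcrit : HCritical G (cycleGraph (2 * t + 1)))
    (x : V) (c : G.Walk x x) (hc : c.IsCycle) (hlen : c.length = 2 * t + 1)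
    (u v : V) (p : G.Walk u v) (hp : IsString G p)
    (hnotsub : ¬ ∀ e ∈ p.edges, e ∈ c.edges) :
    ¬ (u ∈ c.support ∧ v ∈ c.support) := by
  rintro ⟨hu, hv⟩
  obtain ⟨hpath, hdu, -, hdeg⟩ := hp
  obtain ⟨e, hep, hec⟩ : ∃ e ∈ p.edges, e ∉ c.edges := by simpa using hnotsub
  have huv : u ≠ v := by
    rintro rfl
    exact List.ne_nil_of_mem hep (edges_eq_nil.mpr (isPath_iff_nil.mp hpath))
  obtain ⟨q₁, q₂, hq₁, hq₂, hq₁c, hq₂c, hlen₁₂⟩ := hc.exists_isPath_isPath hu hv huv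
  wlog hodd : Odd (p.length + q₁.length) generalizing q₁ q₂
  · exact this q₂ q₁ hq₂ hq₁ hq₂c hq₁c (by omega) (by rw [Nat.odd_iff] at hodd ⊢; omega)
  have hpar := Nat.odd_iff.mp hodd
  rcases lt_or_ge (p.length + q₁.length) (2 * t + 1) with hshort | hlong
  · have := hcrit.le_length_add_length_of_odd hpath hq₁ hdu hodd
    omega
  obtain ⟨φ⟩ := hcrit.nonempty_hom_of_lt (deleteEdges_singleton_lt (p.edges_subset_edgeSet hep))
  obtain ⟨w, hw⟩ := ((q₂.toDeleteEdge e fun h => hec (hq₂c h)).map φ).exists_length_eq_add_two_mul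
    (by simpa [not_nil_iff_lt_length] using not_nil_of_ne huv) ((p.length - q₂.length) / 2)
  have hwp : w.length = p.length := by
    simp only [length_map, length_transfer] at hw
    omega
  exact hcrit.1 (hpath.nonempty_hom_of_reroute
    (fun a ha hau hav b hab => hpath.mem_edges_of_degree_eq_two ha hau hav (hdeg a ha hau hav) hab)
    (φ.comp (.ofLE (deleteEdges_anti (by simpa using hep)))) w hwp)

/-- Let `t ≥ 1` and `G` a `C_{2t+1}`-critical graph.  If `C` is a
`(2t+1)`-cycle in `G` and `S` is a string of `G` not contained in `C`, then at most
one endpoint of `S` lies in `V(C)`. -/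
theorem string_not_both_endpoints_in_cell (t : ℕ) (ht : 1 ≤ t)
    {V : Type} [Fintype V] (G : SimpleGraph V) [DecidableRel G.Adj]
    (hcrit : HCritical G (cycleGraph (2 * t + 1)))
    (x : V) (c : G.Walk x x) (hc : c.IsCycle) (hlen : c.length = 2 * t + 1)
    (u v : V) (p : G.Walk u v) (hp : IsString G p)
    (hnotsub : ¬ ∀ e ∈ p.edges, e ∈ c.edges) :
    ¬ (u ∈ c.support ∧ v ∈ c.support) :=
  string_not_both_endpoints_in_cell_general t G hcrit x c hc hlen u v p hp hnotsub
end

section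
/- In a C_7-critical graph, every string has at most 4 internal vertices. -/
/-!
If a string had length at least 6, delete one of its edges. By criticality the rest of the
graph maps to `C₇`, and in `C₇` any two vertices are joined by a walk of every length at
least 6 (two is invertible modulo 7). Mapping the string along such a walk, while keeping the
colouring everywhere else, gives a homomorphism of the whole graph to `C₇`.
-/

open SimpleGraph

namespace SimpleGraph

variable {V W : Type*} {G : SimpleGraph V} {H : SimpleGraph W}

theorem exists_walk_add_nsmul_length [AddMonoid V] {d : V} (hd : ∀ x, G.Adj x (x + d))
    (n : ℕ) (a : V) : ∃ w : G.Walk a (a + n • d), w.length = n := by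
  induction n generalizing a with
  | zero => exact ⟨Walk.nil.copy rfl (by simp), by simp⟩
  | succ n ih =>
    obtain ⟨w, hw⟩ := ih (a + d)
    exact ⟨(Walk.cons (hd a) w).copy rfl (by rw [succ_nsmul', add_assoc]), by simp [hw]⟩

open Fin.NatCast Fin.CommRing in
theorem cycleGraph_exists_walk_length {k n : ℕ} (hn : 2 * k + 2 ≤ n) (a b : Fin (2 * k + 3)) :
    ∃ w : (cycleGraph (2 * k + 3)).Walk a b, w.length = n := by
  -- `2 * (k + 2) = 1` in `Fin (2 * k + 3)`, so `i` steps up and `n - i` steps down reach `b`.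
  set c : Fin (2 * k + 3) := (k + 2) * (b - a + n)
  set i := c.val
  have hi : i ≤ n := by have := c.isLt; omega
  obtain ⟨w₁, hw₁⟩ := exists_walk_add_nsmul_length (G := cycleGraph (2 * k + 3)) (d := 1)
    (fun x => (cycleGraph_adj (n := 2 * k + 1)).2 (Or.inr (by simp))) i a
  obtain ⟨w₂, hw₂⟩ := exists_walk_add_nsmul_length (G := cycleGraph (2 * k + 3)) (d := -1)
    (fun x => (cycleGraph_adj (n := 2 * k + 1)).2 (Or.inl (by rw [sub_add_cancel_left, neg_neg])))
    (n - i) (a + i • 1)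
  refine ⟨(w₁.append w₂).copy rfl ?_,
    by rw [Walk.length_copy, Walk.length_append, hw₁, hw₂]; omega⟩
  have h0 : ((2 * k + 3 : ℕ) : Fin (2 * k + 3)) = 0 := Fin.natCast_self _
  simp only [nsmul_eq_mul, mul_one, mul_neg, Nat.cast_sub hi, i, Fin.cast_val_eq_self, c]
  push_cast at h0 ⊢
  linear_combination (b - a + n) * h0

theorem Walk.IsPath.mk_mem_edges_of_degree_eq_two [Fintype V] [DecidableRel G.Adj] {u v : V}
    {p : G.Walk u v} (hp : p.IsPath) {a b : V} (ha : a ∈ p.support) (hau : a ≠ u) (hav : a ≠ v)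
    (hdeg : G.degree a = 2) (hab : G.Adj a b) : s(a, b) ∈ p.edges := by
  obtain ⟨i, rfl, hi⟩ := Walk.mem_support_iff_exists_getVert.1 ha
  have hi₀ : i ≠ 0 := by rintro rfl; exact hau p.getVert_zero
  have hil : i < p.length := by
    refine lt_of_le_of_ne hi ?_
    rintro rfl; exact hav p.getVert_length
  have heq : p.toSubgraph.neighborSet (p.getVert i) = G.neighborSet (p.getVert i) := by
    refine Set.eq_of_subset_of_ncard_le (p.toSubgraph.neighborSet_subset _) ?_ (Set.toFinite _)
    rw [hp.ncard_neighborSet_toSubgraph_internal_eq_two hi₀ hil, ← coe_neighborFinset,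
      Set.ncard_coe_finset, card_neighborFinset_eq_degree, hdeg]
  rw [← Walk.adj_toSubgraph_iff_mem_edges, ← Subgraph.mem_neighborSet, heq]
  exact hab

theorem Walk.IsPath.exists_extend_getVert {u v : V} {p : G.Walk u v} (hp : p.IsPath)
    (g : ℕ → W) (φ : V → W) :
    ∃ f : V → W, (∀ i ≤ p.length, f (p.getVert i) = g i) ∧ ∀ x ∉ p.support, f x = φ x := by
  classical
  refine ⟨fun x => if x ∈ p.support then g (p.support.idxOf x) else φ x, fun i hi => ?_,
    fun x hx => if_neg hx⟩
  have hidx : p.support.idxOf (p.getVert i) ≤ p.length := by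
    have := List.idxOf_lt_length_of_mem (p.getVert_mem_support i)
    rw [Walk.length_support] at this
    omega
  simp only [p.getVert_mem_support, if_true]
  congr 1
  exact hp.getVert_injOn hidx hi (p.getVert_support_idxOf (p.getVert_mem_support i))

theorem Walk.IsPath.nonempty_hom_of_reroute_s13 [Fintype V] [DecidableRel G.Adj] {u v : V}
    {p : G.Walk u v} (hp : p.IsPath) (hdeg : ∀ x ∈ p.support, x ≠ u → x ≠ v → G.degree x = 2)
    {e : Sym2 V} (he : e ∈ p.edges) (φ : G.deleteEdges {e} →g H) (w : H.Walk (φ u) (φ v))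
    (hw : w.length = p.length) : Nonempty (G →g H) := by
  obtain ⟨f, hf_path, hf_off⟩ := hp.exists_extend_getVert w.getVert φ
  have hf_internal : ∀ x, f x ≠ φ x → x ∈ p.support ∧ x ≠ u ∧ x ≠ v := by
    intro x hne
    refine ⟨by_contra fun hx => hne (hf_off x hx), ?_, ?_⟩ <;> rintro rfl <;> apply hne
    · rw [← congrArg f p.getVert_zero, hf_path 0 (Nat.zero_le _), w.getVert_zero]
    · rw [← congrArg f p.getVert_length, hf_path _ le_rfl, ← hw, w.getVert_length]
  have hf_of_notMem : ∀ x y, G.Adj x y → s(x, y) ∉ p.edges → f x = φ x := by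
    intro x y hxy hxy'
    by_contra hne
    obtain ⟨hx, hxu, hxv⟩ := hf_internal x hne
    exact hxy' (hp.mk_mem_edges_of_degree_eq_two hx hxu hxv (hdeg x hx hxu hxv) hxy)
  refine ⟨⟨f, fun {a b} hab => ?_⟩⟩
  by_cases hpe : s(a, b) ∈ p.edges
  · obtain ⟨i, hi, hs⟩ := (Walk.mk_mem_edges_iff_exists p).1 hpe
    have hw_adj := w.adj_getVert_succ (hw ▸ hi)
    rcases Sym2.eq_iff.1 hs with ⟨rfl, rfl⟩ | ⟨rfl, rfl⟩
    · rwa [hf_path i hi.le, hf_path (i + 1) hi]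
    · rw [hf_path i hi.le, hf_path (i + 1) hi]; exact hw_adj.symm
  · have hba : s(b, a) ∉ p.edges := by rwa [Sym2.eq_swap]
    rw [hf_of_notMem a b hab hpe, hf_of_notMem b a hab.symm hba]
    have hne : s(a, b) ∉ ({e} : Set (Sym2 V)) := fun h => hpe (Set.mem_singleton_iff.1 h ▸ he)
    exact φ.map_adj ((deleteEdges_adj ..).2 ⟨hab, hne⟩)

end SimpleGraph

theorem HCritical.nonempty_hom_deleteEdges {V W : Type} {G : SimpleGraph V} {H : SimpleGraph W}
    (hcrit : HCritical G H) {x y : V} (hxy : G.Adj x y) :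
    Nonempty (G.deleteEdges {s(x, y)} →g H) := by
  set G' := (⊤ : G.Subgraph).deleteEdges {s(x, y)}
  have hG' : G' ≠ ⊤ := by
    intro h
    have : G'.Adj x y := by rw [h]; exact hxy
    exact ((Subgraph.deleteEdges_adj ..).1 this).2 rfl
  obtain ⟨φ⟩ := hcrit.2 G' hG'
  have hspan : G'.spanningCoe = G.deleteEdges {s(x, y)} := by
    rw [← Subgraph.deleteEdges_spanningCoe_eq, Subgraph.spanningCoe_top]
  have hG'_spanning : G'.IsSpanning := by
    rw [Subgraph.isSpanning_iff, Subgraph.deleteEdges_verts]; rfl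
  exact ⟨φ.comp (hspan ▸ (G'.spanningCoeEquivCoeOfSpanning hG'_spanning).toHom)⟩

/-- In a `C₇`-critical graph, every string has at most 4 internal
vertices (equivalently, length at most 5). -/
theorem c7_string_short {V : Type} [Fintype V] (G : SimpleGraph V)
    [DecidableRel G.Adj] (hcrit : HCritical G (cycleGraph 7))
    {u v : V} (p : G.Walk u v) (hp : IsString G p) :
    p.length ≤ 5 := by
  obtain ⟨hpath, -, -, hdeg⟩ := hp
  by_contra! hlong
  have hadj : G.Adj (p.getVert 0) (p.getVert 1) := p.adj_getVert_succ (by omega)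
  have he : s(p.getVert 0, p.getVert 1) ∈ p.edges :=
    (Walk.mk_mem_edges_iff_exists p).2 ⟨0, by omega, rfl⟩
  obtain ⟨φ⟩ := hcrit.nonempty_hom_deleteEdges hadj
  obtain ⟨w, hw⟩ := cycleGraph_exists_walk_length (k := 2) (n := p.length) (by omega) (φ u) (φ v)
  exact hcrit.1 (hpath.nonempty_hom_of_reroute_s13 hdeg he φ w hw)
end

section
/- In a C_7-critical graph, every vertex v of degree 3 has weight at most 8, i.e., the total number of internal vertices of the three strings incident with v is at most 8. -/
open SimpleGraph

/-!
Delete the interior vertices of some strings (and, at a vertex of degree 3, the vertex itself);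
by criticality the rest of `G` maps to `C₇`. Interior vertices have degree 2, so every edge at
them is a string edge, and the strings can be mapped back in position by position whenever `C₇`
has walks of the right lengths between the images of their ends; this would give a homomorphism
`G → C₇`. In `C₇` any two vertices are joined by walks of every length `≥ 6`, so a string has at
most four interior vertices. At `v` of degree 3 one needs an image `c` of `v` joined to the
images of the three far ends by walks of lengths `k i + 1`, and such a `c` exists as soon as
`k 0 + k 1 + k 2 ≥ 9`.
-/

section CycleGraphSeven

open Fin.NatCast Fin.CommRing

theorem SimpleGraph.cycleGraph_exists_walk_length_s14 {n : ℕ} (a b : ℕ) {x y : Fin (n + 2)}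
    (h : y = x + a - b) : ∃ q : (cycleGraph (n + 2)).Walk x y, q.length = a + b := by
  induction a generalizing x with
  | zero =>
    induction b generalizing x with
    | zero => exact ⟨Walk.nil.copy rfl (by simpa using h.symm), by simp⟩
    | succ b ih =>
      obtain ⟨q, hq⟩ := ih (x := x - 1) (by rw [h]; push_cast; ring)
      exact ⟨.cons (cycleGraph_adj.mpr (.inl (by ring))) q, by simp [hq]⟩
  | succ a ih =>
    obtain ⟨q, hq⟩ := ih (x := x + 1) (by rw [h]; push_cast; ring)
    exact ⟨.cons (cycleGraph_adj.mpr (.inr (by ring))) q, by simp [hq]; ring⟩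

def C7Reach (ℓ : ℕ) (x y : Fin 7) : Prop :=
  ∃ a ∈ Finset.range (ℓ + 1), y = x + a - (ℓ - a : ℕ)

instance (ℓ : ℕ) (x y : Fin 7) : Decidable (C7Reach ℓ x y) := by
  unfold C7Reach; infer_instance

theorem C7Reach.exists_walk {ℓ : ℕ} {x y : Fin 7} (h : C7Reach ℓ x y) :
    ∃ q : (cycleGraph 7).Walk x y, q.length = ℓ := by
  obtain ⟨a, ha, rfl⟩ := h
  obtain ⟨q, hq⟩ := cycleGraph_exists_walk_length_s14 (n := 5) a (ℓ - a) rfl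
  exact ⟨q, by rw [hq]; simp at ha; omega⟩

theorem C7Reach.add_two {ℓ : ℕ} {x y : Fin 7} (h : C7Reach ℓ x y) :
    C7Reach (ℓ + 2) x y := by
  obtain ⟨a, ha, rfl⟩ := h
  rw [Finset.mem_range] at ha
  refine ⟨a + 1, Finset.mem_range.mpr (by omega), ?_⟩
  rw [show ℓ + 2 - (a + 1) = ℓ - a + 1 by omega]
  push_cast
  ring

theorem c7Reach_of_six_le {ℓ : ℕ} (h : 6 ≤ ℓ) (x y : Fin 7) : C7Reach ℓ x y := by
  induction ℓ using Nat.strong_induction_on with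
  | _ ℓ ih =>
    rcases (by omega : ℓ = 6 ∨ ℓ = 7 ∨ 8 ≤ ℓ) with rfl | rfl | h8
    · revert x y; decide
    · revert x y; decide
    · obtain ⟨m, rfl⟩ := Nat.exists_eq_add_of_le' h8
      exact (ih (m + 6) (by omega) (by omega)).add_two

-- For `k ≤ 4`, the `c` with `C7Reach (k + 1) c y` miss only `5 - k` of the seven vertices, and
-- `(5 - k₀) + (5 - k₁) + (5 - k₂) < 7`.
theorem exists_common_c7Reach : ∀ k₀ ∈ Finset.range 5, ∀ k₁ ∈ Finset.range 5,
    ∀ k₂ ∈ Finset.range 5, 9 ≤ k₀ + k₁ + k₂ → ∀ y₀ y₁ y₂ : Fin 7,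
      ∃ c, C7Reach (k₀ + 1) c y₀ ∧ C7Reach (k₁ + 1) c y₁ ∧
        C7Reach (k₂ + 1) c y₂ := by
  decide

end CycleGraphSeven

theorem exists_c7_walks_from_common_vertex {k : Fin 3 → ℕ} (hk : ∀ i, k i ≤ 4)
    (hsum : 9 ≤ k 0 + k 1 + k 2) (y : Fin 3 → Fin 7) :
    ∃ c, ∀ i, ∃ q : (cycleGraph 7).Walk c (y i), q.length = k i + 1 := by
  have hk5 : ∀ i, k i ∈ Finset.range 5 := fun i => Finset.mem_range.mpr (by have := hk i; omega)
  obtain ⟨c, h₀, h₁, h₂⟩ :=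
    exists_common_c7Reach _ (hk5 0) _ (hk5 1) _ (hk5 2) hsum (y 0) (y 1) (y 2)
  refine ⟨c, fun i => ?_⟩
  fin_cases i
  exacts [h₀.exists_walk, h₁.exists_walk, h₂.exists_walk]

namespace SimpleGraph

theorem mem_of_adj_of_degree_le_card {V : Type*} {G : SimpleGraph V} [Fintype V]
    [DecidableRel G.Adj] {s : Finset V} {v b : V} (hs : s ⊆ G.neighborFinset v)
    (hdeg : G.degree v ≤ s.card) (hb : G.Adj v b) : b ∈ s := by
  rw [Finset.eq_of_subset_of_card_le hs (by rwa [card_neighborFinset_eq_degree])]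
  exact (mem_neighborFinset G v b).mpr hb

def Walk.internalVerts {V : Type*} {G : SimpleGraph V} {u v : V} (p : G.Walk u v) : Set V :=
  {z | ∃ n, 0 < n ∧ n < p.length ∧ p.getVert n = z}

end SimpleGraph

namespace IsString

variable {V : Type} [Fintype V] {G : SimpleGraph V} [DecidableRel G.Adj]

theorem degree_getVert {u v : V} {p : G.Walk u v} (hp : IsString G p) {n : ℕ} (h0 : 0 < n)
    (hn : n < p.length) : G.degree (p.getVert n) = 2 :=
  hp.2.2.2 _ (p.getVert_mem_support n)
    (fun h => h0.ne' ((hp.1.getVert_eq_start_iff hn.le).mp h))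
    (fun h => hn.ne ((hp.1.getVert_eq_end_iff hn.le).mp h))

theorem getVert_mem_internalVerts {u v : V} {p : G.Walk u v} (hp : IsString G p) {n : ℕ}
    (hn : n ≤ p.length) (hdeg : G.degree (p.getVert n) = 2) :
    p.getVert n ∈ p.internalVerts := by
  refine ⟨n, Nat.pos_of_ne_zero ?_, lt_of_le_of_ne hn ?_, rfl⟩
  · rintro rfl
    have := hp.2.1
    rw [p.getVert_zero] at hdeg
    omega
  · rintro rfl
    have := hp.2.2.1
    rw [p.getVert_length] at hdeg
    omega

theorem eq_getVert_of_adj {u v : V} {p : G.Walk u v} (hp : IsString G p) {n : ℕ} (h0 : 0 < n)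
    (hn : n < p.length) {b : V} (hb : G.Adj (p.getVert n) b) :
    b = p.getVert (n - 1) ∨ b = p.getVert (n + 1) := by
  classical
  have hprev : G.Adj (p.getVert n) (p.getVert (n - 1)) := by
    simpa [Nat.sub_add_cancel h0] using (p.adj_getVert_succ (i := n - 1) (by omega)).symm
  have hne : p.getVert (n - 1) ≠ p.getVert (n + 1) := fun h => by
    have := hp.1.getVert_injOn (by simp; omega) (by simp; omega) h
    omega
  have hs : {p.getVert (n - 1), p.getVert (n + 1)} ⊆ G.neighborFinset (p.getVert n) := by
    simp [Finset.insert_subset_iff, hprev, p.adj_getVert_succ hn]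
  simpa using mem_of_adj_of_degree_le_card hs
    (by rw [hp.degree_getVert h0 hn, Finset.card_pair hne]) hb

variable {v a b : V} {p : G.Walk v a} {q : G.Walk v b}

theorem getVert_eq_of_snd_eq (hp : IsString G p) (hq : IsString G q) (h : p.snd = q.snd) :
    ∀ n, n ≤ p.length → n ≤ q.length → p.getVert n = q.getVert n := by
  intro n
  induction n using Nat.twoStepInduction with
  | zero => simp
  | one => exact fun _ _ => h
  | more n ih₀ ih₁ =>
    intro hnp hnq
    have hzq : p.getVert (n + 1) = q.getVert (n + 1) := ih₁ (by omega) (by omega)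
    rcases hp.eq_getVert_of_adj (n := n + 1) (by omega) (by omega)
        (hzq ▸ q.adj_getVert_succ (i := n + 1) (by omega)) with h' | h'
    · rw [Nat.add_sub_cancel, ih₀ (by omega) (by omega)] at h'
      have := hq.1.getVert_injOn (by simp; omega) (by simp; omega) h'
      omega
    · exact h'.symm

theorem support_eq_of_snd_eq (hp : IsString G p) (hq : IsString G q) (hp0 : 0 < p.length)
    (hq0 : 0 < q.length) (h : p.snd = q.snd) : p.support = q.support := by
  have hagree := hp.getVert_eq_of_snd_eq hq h
  have hlen : p.length = q.length := by
    by_contra hne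
    rcases Nat.lt_or_gt_of_ne hne with hlt | hlt
    · have := hq.degree_getVert hp0 hlt
      have := hp.2.2.1
      rw [← hagree _ le_rfl hlt.le, p.getVert_length] at *
      omega
    · have := hp.degree_getVert hq0 hlt
      have := hq.2.2.1
      rw [hagree _ hlt.le le_rfl, q.getVert_length] at *
      omega
  obtain rfl : a = b := by
    rw [← p.getVert_length, hagree _ le_rfl hlen.le, hlen, q.getVert_length]
  rw [Walk.ext_getVert_le_length hlen fun n hn => hagree n hn (hlen ▸ hn)]

-- The predecessor on `p` of a common interior vertex is one of its two neighbours on `q`, so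
-- walking back along `p` stays on `q` until it reaches `v`.
theorem snd_eq_of_getVert_mem_internalVerts (hp : IsString G p) (hq : IsString G q) {n : ℕ}
    (h0 : 0 < n) (hn : n < p.length) (hz : p.getVert n ∈ q.internalVerts) : p.snd = q.snd := by
  induction n with
  | zero => omega
  | succ n ih =>
    obtain ⟨m, hm0, hm, hzm⟩ := hz
    have hprev := hq.eq_getVert_of_adj hm0 hm
      (hzm ▸ (p.adj_getVert_succ (i := n) (by omega)).symm)
    rcases Nat.eq_zero_or_pos n with rfl | hn0
    · suffices m = 1 by rw [Walk.snd, ← hzm, this]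
      rw [p.getVert_zero] at hprev
      rcases hprev with h' | h' <;>
        have := (hq.1.getVert_eq_start_iff (by omega)).mp h'.symm <;> omega
    · apply ih hn0 (by omega)
      have hdeg := hp.degree_getVert hn0 (by omega)
      rcases hprev with h' | h' <;> rw [h'] at hdeg ⊢
      · exact hq.getVert_mem_internalVerts (by omega) hdeg
      · exact hq.getVert_mem_internalVerts (by omega) hdeg

theorem disjoint_internalVerts (hp : IsString G p) (hq : IsString G q)
    (hne : p.support ≠ q.support) : Disjoint p.internalVerts q.internalVerts := by
  rw [Set.disjoint_left]
  rintro _ ⟨n, h0, hn, rfl⟩ hz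
  have hq0 : 0 < q.length := by
    obtain ⟨m, -, hm, -⟩ := hz
    omega
  exact hne (hp.support_eq_of_snd_eq hq (by omega) hq0
    (hp.snd_eq_of_getVert_mem_internalVerts hq h0 hn hz))

end IsString

theorem HCritical.exists_map_adj_outside {V W : Type} {G : SimpleGraph V} {H : SimpleGraph W}
    [Nonempty W] (hG : HCritical G H) {D : Set V} (hD : D.Nonempty) :
    ∃ f : V → W, ∀ a b, G.Adj a b → a ∉ D → b ∉ D → H.Adj (f a) (f b) := by
  classical
  obtain ⟨d, hd⟩ := hD
  obtain ⟨φ⟩ := hG.2 ((⊤ : G.Subgraph).deleteVerts D) fun h => by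
    have : d ∈ ((⊤ : G.Subgraph).deleteVerts D).verts := by rw [h]; trivial
    exact this.2 hd
  refine ⟨fun a => if h : a ∈ D then Classical.arbitrary W else φ ⟨a, trivial, h⟩,
    fun a b hab ha hb => ?_⟩
  simp only [dif_neg ha, dif_neg hb]
  exact φ.map_adj (by simpa using ⟨ha, hb, hab⟩)

section Gluing

variable {V W ι : Type} [Fintype V] {G : SimpleGraph V} [DecidableRel G.Adj] {H : SimpleGraph W}
  {x y : ι → V} (p : ∀ i, G.Walk (x i) (y i))

theorem exists_map_along_strings (hp : ∀ i, IsString G (p i))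
    (hdisj : Pairwise fun i j => Disjoint (p i).internalVerts (p j).internalVerts)
    (f : V → W) (q : ∀ i, H.Walk (f (x i)) (f (y i)))
    (hq : ∀ i, (q i).length = (p i).length) :
    ∃ g : V → W, (∀ z, (∀ i, z ∉ (p i).internalVerts) → g z = f z) ∧
      ∀ i n, n ≤ (p i).length → g ((p i).getVert n) = (q i).getVert n := by
  classical
  let g : V → W := fun z =>
    if h : ∃ s : ι × ℕ, 0 < s.2 ∧ s.2 < (p s.1).length ∧ (p s.1).getVert s.2 = z
    then (q h.choose.1).getVert h.choose.2 else f z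
  have hg_out : ∀ z, (∀ i, z ∉ (p i).internalVerts) → g z = f z := fun z hz =>
    dif_neg fun ⟨⟨j, m⟩, h0, hm, heq⟩ => hz j ⟨m, h0, hm, heq⟩
  have hg_int : ∀ i n, 0 < n → n < (p i).length → g ((p i).getVert n) = (q i).getVert n := by
    intro i n h0 hn
    have h : ∃ s : ι × ℕ,
        0 < s.2 ∧ s.2 < (p s.1).length ∧ (p s.1).getVert s.2 = (p i).getVert n :=
      ⟨(i, n), h0, hn, rfl⟩
    simp only [g, dif_pos h]
    have hspec := h.choose_spec
    generalize h.choose = s at hspec ⊢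
    obtain ⟨j, m⟩ := s
    obtain ⟨h0', hm, heq⟩ :
        0 < m ∧ m < (p j).length ∧ (p j).getVert m = (p i).getVert n := hspec
    obtain rfl : j = i := by
      by_contra hji
      exact Set.disjoint_left.mp (hdisj hji) ⟨m, h0', hm, heq⟩ ⟨n, h0, hn, rfl⟩
    obtain rfl : m = n := (hp j).1.getVert_injOn (by simp; omega) (by simp; omega) heq
    rfl
  have hg_ends : ∀ j, ∀ z ∈ ({x j, y j} : Set V), g z = f z := by
    rintro j z hz
    refine hg_out z fun i ⟨m, h0, hm, heq⟩ => ?_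
    have := heq ▸ (hp i).degree_getVert h0 hm
    rcases hz with rfl | rfl
    · have := (hp j).2.1; omega
    · have := (hp j).2.2.1; omega
  refine ⟨g, hg_out, fun i n hn => ?_⟩
  rcases Nat.eq_zero_or_pos n with rfl | h0
  · rw [(p i).getVert_zero, (q i).getVert_zero, hg_ends i _ (.inl rfl)]
  rcases hn.lt_or_eq with hn | rfl
  · exact hg_int i n h0 hn
  · rw [(p i).getVert_length, ← hq i, (q i).getVert_length, hg_ends i _ (.inr rfl)]

theorem nonempty_hom_of_strings (hp : ∀ i, IsString G (p i))
    (hdisj : Pairwise fun i j => Disjoint (p i).internalVerts (p j).internalVerts)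
    (f : V → W) (hf : ∀ a b, G.Adj a b → (∀ i, a ∉ (p i).internalVerts) →
      (∀ i, b ∉ (p i).internalVerts) → H.Adj (f a) (f b))
    (q : ∀ i, H.Walk (f (x i)) (f (y i))) (hq : ∀ i, (q i).length = (p i).length) :
    Nonempty (G →g H) := by
  obtain ⟨g, hg_out, hg_path⟩ := exists_map_along_strings p hp hdisj f q hq
  have hg_adj : ∀ i a b, G.Adj a b → a ∈ (p i).internalVerts → H.Adj (g a) (g b) := by
    rintro i _ b hab ⟨n, h0, hn, rfl⟩
    rw [hg_path i n hn.le]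
    rcases (hp i).eq_getVert_of_adj h0 hn hab with rfl | rfl
    · rw [hg_path i _ (by omega)]
      simpa [Nat.sub_add_cancel h0] using
        ((q i).adj_getVert_succ (i := n - 1) (by rw [hq i]; omega)).symm
    · rw [hg_path i _ (by omega)]
      exact (q i).adj_getVert_succ (by rw [hq i]; omega)
  refine ⟨⟨g, fun {a b} hab => ?_⟩⟩
  by_cases ha : ∃ i, a ∈ (p i).internalVerts
  · obtain ⟨i, ha⟩ := ha
    exact hg_adj i a b hab ha
  by_cases hb : ∃ i, b ∈ (p i).internalVerts
  · obtain ⟨i, hb⟩ := hb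
    exact (hg_adj i b a hab.symm hb).symm
  simp only [not_exists] at ha hb
  rw [hg_out a ha, hg_out b hb]
  exact hf a b hab ha hb

end Gluing

theorem IsString.length_le_five {V : Type} [Fintype V] {G : SimpleGraph V} [DecidableRel G.Adj]
    (hG : HCritical G (cycleGraph 7)) {u v : V} {p : G.Walk u v} (hp : IsString G p) :
    p.length ≤ 5 := by
  by_contra! hlen
  obtain ⟨f, hf⟩ :=
    hG.exists_map_adj_outside (D := p.internalVerts) ⟨p.snd, 1, one_pos, by omega, rfl⟩
  obtain ⟨q, hq⟩ := (c7Reach_of_six_le hlen (f u) (f v)).exists_walk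
  exact hG.1 <| nonempty_hom_of_strings (fun _ : Unit => p) (fun _ => hp)
    (fun i j hij => (hij (Subsingleton.elim i j)).elim) f
    (fun a b hab ha hb => hf a b hab (ha ()) (hb ())) (fun _ => q) (fun _ => hq)

theorem exists_snd_eq_of_adj {V ι : Type} [Fintype V] [Fintype ι] {G : SimpleGraph V}
    [DecidableRel G.Adj] {v : V} {w : ι → V} {p : ∀ i, G.Walk v (w i)}
    (hp : ∀ i, IsString G (p i)) (hpos : ∀ i, 0 < (p i).length)
    (hdist : Pairwise fun i j => (p i).support ≠ (p j).support)
    (hdeg : G.degree v ≤ Fintype.card ι) {b : V} (hb : G.Adj v b) : ∃ i, (p i).snd = b := by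
  classical
  have hinj : Function.Injective fun i => (p i).snd := fun i j h => by
    by_contra hij
    exact hdist hij ((hp i).support_eq_of_snd_eq (hp j) (hpos i) (hpos j) h)
  have hs : Finset.univ.image (fun i => (p i).snd) ⊆ G.neighborFinset v := by
    simpa [Finset.image_subset_iff] using
      fun i => (p i).adj_snd (Walk.not_nil_iff_lt_length.mpr (hpos i))
  simpa using mem_of_adj_of_degree_le_card hs
    (by rwa [Finset.card_image_of_injective _ hinj, Finset.card_univ]) hb

theorem HCritical.false_of_strings_at_vertex {V W ι : Type} [Fintype V] [Fintype ι]
    {G : SimpleGraph V} [DecidableRel G.Adj] {H : SimpleGraph W} [Nonempty W]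
    (hG : HCritical G H) {v : V} {w : ι → V} {p : ∀ i, G.Walk v (w i)}
    (hp : ∀ i, IsString G (p i)) (hdist : Pairwise fun i j => (p i).support ≠ (p j).support)
    (hdeg : G.degree v ≤ Fintype.card ι) (hlen : ∀ i, 2 ≤ (p i).length)
    (hwalks : ∀ y : ι → W, ∃ c, ∀ i, ∃ q : H.Walk c (y i), q.length = (p i).length) :
    False := by
  classical
  have hv : ∀ b, G.Adj v b → ∃ i, b ∈ (p i).internalVerts := fun b hb => by
    obtain ⟨i, rfl⟩ := exists_snd_eq_of_adj hp (fun i => by have := hlen i; omega) hdist hdeg hb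
    exact ⟨i, 1, one_pos, hlen i, rfl⟩
  have hwv : ∀ i, w i ≠ v := fun i h => by
    have := ((hp i).1.getVert_eq_end_iff (Nat.zero_le _)).mp (by rw [(p i).getVert_zero, h])
    have := hlen i
    omega
  obtain ⟨f, hf⟩ := hG.exists_map_adj_outside (D := insert v (⋃ i, (p i).internalVerts))
    (Set.insert_nonempty _ _)
  obtain ⟨c, hc⟩ := hwalks fun i => f (w i)
  choose q hq using hc
  refine hG.1 (nonempty_hom_of_strings p hp
    (fun i j hij => (hp i).disjoint_internalVerts (hp j) (hdist hij)) (Function.update f v c) ?_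
    (fun i => (q i).copy (by simp) (by simp [hwv i])) (by simpa using hq))
  intro a b hab ha hb
  have ha' : a ≠ v := by
    rintro rfl
    obtain ⟨i, hi⟩ := hv b hab
    exact hb i hi
  have hb' : b ≠ v := by
    rintro rfl
    obtain ⟨i, hi⟩ := hv a hab.symm
    exact ha i hi
  rw [Function.update_of_ne ha', Function.update_of_ne hb']
  exact hf a b hab (by simp [ha', ha]) (by simp [hb', hb])

/-- In a `C₇`-critical graph, every vertex `v` of degree 3 has weight
at most 8: the three distinct strings incident with `v`, having `k 0, k 1, k 2`
internal vertices, satisfy `k 0 + k 1 + k 2 ≤ 8`. -/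
theorem c7_deg3_weight_le_eight {V : Type} [Fintype V] (G : SimpleGraph V)
    [DecidableRel G.Adj] (hcrit : HCritical G (cycleGraph 7))
    (v : V) (hdeg : G.degree v = 3)
    (w : Fin 3 → V) (p : ∀ i : Fin 3, G.Walk v (w i))
    (hstr : ∀ i, IsString G (p i))
    (hdist : ∀ i j, i ≠ j → (p i).support ≠ (p j).support)
    (k : Fin 3 → ℕ) (hk : ∀ i, (p i).length = k i + 1) :
    k 0 + k 1 + k 2 ≤ 8 := by
  by_contra! hsum
  have hk4 : ∀ i, k i ≤ 4 := fun i => by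
    have := (hstr i).length_le_five hcrit
    have := hk i
    omega
  have hk1 : ∀ i, 1 ≤ k i := by
    have := hk4 0; have := hk4 1; have := hk4 2
    intro i; fin_cases i <;> simp <;> omega
  refine hcrit.false_of_strings_at_vertex hstr (fun i j => hdist i j) (by simp [hdeg])
    (fun i => by have := hk1 i; have := hk i; omega) fun y => ?_
  obtain ⟨c, hc⟩ := exists_c7_walks_from_common_vertex hk4 (by omega) y
  exact ⟨c, fun i => by simpa [hk i] using hc i⟩
end
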